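/- Let m > 0, 0 ≤ ε < m/2 and θ = 0 (OE collinear with the true outlier mean). Define E(r) = (1 - Φ(r/2 - ε)) + (1 - Φ(r/2 - (r - m) - ε)) for r ≥ m. Then E(r) > E(m) for all r > m; i.e., moving the OE farther along the outlier direction strictly increases the adversarial error. -/
import Mathlib

open MeasureTheory intervalIntegral Set

/-- The standard normal density. -/
noncomputable def stdGaussPDF (x : ℝ) : ℝ :=
  (Real.sqrt (2 * Real.pi))⁻¹ * Real.exp (-x ^ 2 / 2)

/-- The standard normal cumulative distribution function `Φ`. -/
noncomputable def Phi (x : ℝ) : ℝ := ∫ t in Set.Iic x, stdGaussPDF t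

lemma stdGauss_cont : Continuous stdGaussPDF := by
  unfold stdGaussPDF
  continuity

lemma stdGauss_integrable : MeasureTheory.Integrable stdGaussPDF := by
  have h := integrable_exp_neg_mul_sq (by norm_num : (0:ℝ) < 1/2)
  have heq : stdGaussPDF = fun x => (Real.sqrt (2*Real.pi))⁻¹ * Real.exp (-(1/2) * x^2) := by
    funext x; unfold stdGaussPDF; ring_nf
  rw [heq]
  exact h.const_mul _

lemma Phi_sub (a b : ℝ) : Phi b - Phi a = ∫ x in a..b, stdGaussPDF x := by
  unfold Phi
  exact integral_Iic_sub_Iic stdGauss_integrable.integrableOn stdGauss_integrable.integrableOn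

lemma stdGauss_mono {x y : ℝ} (h : x ^ 2 ≤ y ^ 2) : stdGaussPDF y ≤ stdGaussPDF x := by
  unfold stdGaussPDF
  have hc : (0:ℝ) < (Real.sqrt (2 * Real.pi))⁻¹ := by
    positivity
  gcongr

lemma stdGauss_strict {x y : ℝ} (h : x ^ 2 < y ^ 2) : stdGaussPDF y < stdGaussPDF x := by
  unfold stdGaussPDF
  have hc : (0:ℝ) < (Real.sqrt (2 * Real.pi))⁻¹ := by positivity
  have : Real.exp (-y ^ 2 / 2) < Real.exp (-x ^ 2 / 2) := by
    apply Real.exp_lt_exp.2; linarith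
  nlinarith

/-- Key inequality: for `0 < a` and `0 < δ`, `Φ(a+δ) + Φ(a-δ) < 2 Φ a`. -/
lemma phi_concave {a δ : ℝ} (ha : 0 < a) (hδ : 0 < δ) :
    Phi (a + δ) + Phi (a - δ) < 2 * Phi a := by
  have h1 : Phi (a + δ) - Phi a = ∫ x in a..(a + δ), stdGaussPDF x := Phi_sub a (a + δ)
  have h2 : Phi a - Phi (a - δ) = ∫ x in a..(a + δ), stdGaussPDF (2 * a - x) := by
    rw [integral_comp_sub_left stdGaussPDF (2 * a)]
    have e1 : 2 * a - (a + δ) = a - δ := by ring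
    have e2 : 2 * a - a = a := by ring
    rw [e1, e2, Phi_sub]
  have key : (∫ x in a..(a + δ), stdGaussPDF x) <
      ∫ x in a..(a + δ), stdGaussPDF (2 * a - x) := by
    apply integral_lt_integral_of_continuousOn_of_le_of_exists_lt (by linarith)
      (stdGauss_cont.continuousOn)
      ((stdGauss_cont.comp (by continuity)).continuousOn)
    · intro x hx
      apply stdGauss_mono
      nlinarith [hx.1, hx.2]
    · refine ⟨a + δ, ⟨by linarith, le_refl _⟩, ?_⟩
      apply stdGauss_strict
      nlinarith
  linarith

/-- For `m > 0`, `0 ≤ ε < m/2`, `θ = 0`, and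
`E(r) = (1 - Φ(r/2 - ε)) + (1 - Φ(r/2 - (r - m) - ε))`, one has `E(r) > E(m)`
for all `r > m`: moving the OE farther along the outlier direction strictly
increases the adversarial error. -/
theorem stmt14 (m ε : ℝ) (hm : 0 < m) (hε : 0 ≤ ε) (hεm : ε < m / 2)
    (E : ℝ → ℝ)
    (hE : ∀ r, E r = (1 - Phi (r / 2 - ε)) + (1 - Phi (r / 2 - (r - m) - ε))) :
    ∀ r, m < r → E m < E r := by
  intro r hr
  rw [hE r, hE m]
  have ha : 0 < m / 2 - ε := by linarith
  have hδ : 0 < (r - m) / 2 := by linarith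
  have h := phi_concave ha hδ
  have e1 : m / 2 - ε + (r - m) / 2 = r / 2 - ε := by ring
  have e2 : m / 2 - ε - (r - m) / 2 = r / 2 - (r - m) - ε := by ring
  rw [e1, e2] at h
  have e3 : m / 2 - (m - m) - ε = m / 2 - ε := by ring
  rw [e3]
  linarith
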